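/- arXiv:1308.2633 — 2 statements merged into one kernel-verified Lean document; each statement's English description precedes it below -/
import Mathlib

section
/- (Matrix-Tree Theorem, weighted symmetric version) If L is an n×n symmetric real matrix with all row sums zero, then the common cofactor C(L) satisfies C(L) = (-1)^{n+1} Σ_τ Π_{{i,j} ∈ Edges(τ)} L_{ij}, where the sum ranges over all trees τ on the vertex set {1,…,n}. -/
open scoped Classical

/-- The (i,j) cofactor of a square matrix. -/
noncomputable def cofactor {n : ℕ} (L : Matrix (Fin (n + 1)) (Fin (n + 1)) ℝ)
    (i j : Fin (n + 1)) : ℝ :=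
  (-1 : ℝ) ^ ((i : ℕ) + (j : ℕ)) * (L.submatrix i.succAbove j.succAbove).det

/-- The amplitude `A_τ(L)`: the product of `L a b` over the edges `{a,b}` of `τ`
with `a < b`. -/
noncomputable def amplitude {n : ℕ} (τ : SimpleGraph (Fin n))
    (L : Matrix (Fin n) (Fin n) ℝ) : ℝ :=
  ∏ p ∈ Finset.univ.filter (fun p : Fin n × Fin n => p.1 < p.2 ∧ τ.Adj p.1 p.2), L p.1 p.2

/-- The tree sum `T(L) = Σ_τ A_τ(L)`, summing over all trees on the vertex set. -/
noncomputable def treeSum {n : ℕ} (L : Matrix (Fin n) (Fin n) ℝ) : ℝ :=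
  ∑ τ ∈ Finset.univ.filter (fun τ : SimpleGraph (Fin n) => τ.IsTree), amplitude τ L

/-!
All cofactors of a symmetric matrix with zero row sums agree, so it suffices to expand the minor
`det (L.submatrix succ succ)`. Since the rows of `L` sum to zero, row `k` of that minor is
`∑_b L (k+1) b • (e_b - e_k)` (with `e_0 = 0`); by multilinearity the minor is the sum, over all
maps `f` giving each non-root vertex a parent, of `∏_k L (k+1) (f k) * det (P_f - 1)`, where `P_f`
is the parent-pointer matrix. If some vertex never reaches the root `0` by following parents, the
indicator of such vertices lies in the kernel of `P_f - 1`; otherwise `P_f - 1` is triangular with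
diagonal `-1` when the vertices are ordered by depth. The maps of the second kind correspond
exactly to the trees on the vertices (the parent of a vertex is its neighbour towards `0`), and for
symmetric `L` the weight of `f` is the amplitude of its tree.
-/

open Finset Matrix

namespace Matrix

variable {m R : Type*} [Fintype m] [DecidableEq m] [CommRing R]

theorem det_updateRow_eq_of_sum_eq_zero (A : Matrix m m R) (hA : ∀ c, ∑ k, A k c = 0)
    (v : m → R) (i i' : m) : (A.updateRow i v).det = (A.updateRow i' v).det := by
  rcases eq_or_ne i i' with rfl | hii'
  · rfl
  set M := A.updateRow i v
  -- Adding the rows `k ≠ i` of `M` to its row `i'` turns that row into `-A i`; then swap `i, i'`.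
  have hsum : ∑ k, (if k = i then 0 else 1 : R) • M k = -A i := by
    funext c
    simp only [Finset.sum_apply, Pi.smul_apply, Pi.neg_apply, smul_eq_mul, ite_mul, zero_mul,
      one_mul]
    rw [Finset.sum_ite, sum_const_zero, zero_add, eq_neg_iff_add_eq_zero, ← hA c,
      ← Finset.add_sum_erase _ _ (mem_univ i), add_comm, Finset.filter_ne']
    exact congrArg₂ _ rfl (sum_congr rfl fun k hk => by simp [M, ne_of_mem_erase hk])
  have hswap : M.updateRow i' (A i) = (A.updateRow i' v).submatrix (Equiv.swap i i') id := by
    ext r c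
    rcases eq_or_ne r i' with rfl | hr'
    · simp [hii']
    rcases eq_or_ne r i with rfl | hr
    · simp [M, hr']
    · simp [M, hr, hr', Equiv.swap_apply_of_ne_of_ne hr hr']
  calc M.det = (M.updateRow i' (-A i)).det := by
        rw [← hsum, det_updateRow_sum, if_neg hii'.symm, one_smul]
    _ = -(M.updateRow i' (A i)).det := by
        rw [← neg_one_smul R (A i), det_updateRow_smul, neg_one_mul]
    _ = (A.updateRow i' v).det := by
        rw [hswap, det_permute, Equiv.Perm.sign_swap hii']
        simp

theorem adjugate_apply_eq_of_sum_eq_zero (A : Matrix m m R) (hA : ∀ c, ∑ k, A k c = 0)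
    (i j j' : m) : adjugate A i j = adjugate A i j' := by
  simp only [adjugate_apply]
  exact det_updateRow_eq_of_sum_eq_zero A hA _ j j'

theorem adjugate_apply_eq_of_isSymm (A : Matrix m m R) (hA : A.IsSymm)
    (hrow : ∀ i, ∑ j, A i j = 0) (i j i' j' : m) : adjugate A i j = adjugate A i' j' := by
  have hcol : ∀ c, ∑ k, A k c = 0 := fun c => by
    rw [← hrow c]
    exact sum_congr rfl fun k _ => hA.apply c k
  have hadj : ∀ i j, adjugate A i j = adjugate A j i := fun i j => by
    rw [← transpose_apply (adjugate A), adjugate_transpose, hA.eq]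
  calc adjugate A i j = adjugate A i j' := adjugate_apply_eq_of_sum_eq_zero A hcol i j j'
    _ = adjugate A j' i := hadj i j'
    _ = adjugate A j' i' := adjugate_apply_eq_of_sum_eq_zero A hcol j' i i'
    _ = adjugate A i' j' := hadj j' i'

theorem det_of_sum_smul {ι : Type*} [Fintype ι] (w : m → ι → R) (v : m → ι → m → R) :
    (of fun k => ∑ b, w k b • v k b).det
      = ∑ f : m → ι, (∏ k, w k (f k)) * (of fun k => v k (f k)).det := by
  change detRowAlternating.toMultilinearMap (fun k => ∑ b, w k b • v k b)
    = ∑ f : m → ι, _ * detRowAlternating.toMultilinearMap (fun k => v k (f k))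
  rw [MultilinearMap.map_sum]
  simp_rw [MultilinearMap.map_smul_univ, smul_eq_mul]

theorem BlockTriangular.det_eq_det {α : Type*} [LinearOrder α] {b : m → α} {M N : Matrix m m R}
    (hM : M.BlockTriangular b) (hN : N.BlockTriangular b)
    (h : ∀ i j, b i = b j → M i j = N i j) : M.det = N.det := by
  rw [hM.det, hN.det]
  refine prod_congr rfl fun a _ => congrArg det ?_
  ext ⟨i, hi⟩ ⟨j, hj⟩
  exact h i j (hi.trans hj.symm)

end Matrix

theorem cofactor_eq_adjugate {n : ℕ} (L : Matrix (Fin (n + 1)) (Fin (n + 1)) ℝ)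
    (i j : Fin (n + 1)) : cofactor L i j = L.adjugate j i := by
  rw [Matrix.adjugate_fin_succ_eq_det_submatrix, cofactor]

theorem cofactor_zero_zero {n : ℕ} (L : Matrix (Fin (n + 1)) (Fin (n + 1)) ℝ) :
    cofactor L 0 0 = (L.submatrix Fin.succ Fin.succ).det := by
  simp [cofactor, Fin.succAbove_zero]

namespace MatrixTree

variable {n : ℕ} {R : Type*} [CommRing R] {f : Fin n → Fin (n + 1)}

-- `f` gives the non-root vertex `k.succ` the parent `f k`; the root `0` is its own parent.
def parent (f : Fin n → Fin (n + 1)) : Fin (n + 1) → Fin (n + 1) := Fin.cons 0 f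

@[simp] theorem parent_zero (f : Fin n → Fin (n + 1)) : parent f 0 = 0 := rfl

@[simp] theorem parent_succ (f : Fin n → Fin (n + 1)) (k : Fin n) : parent f k.succ = f k := rfl

def ReachesRoot (f : Fin n → Fin (n + 1)) : Prop := ∀ a, ∃ m, (parent f)^[m] a = 0

theorem ReachesRoot.iterate_ne_self (hf : ReachesRoot f) {a : Fin (n + 1)} (ha : a ≠ 0) {m : ℕ}
    (hm : 0 < m) : (parent f)^[m] a ≠ a := by
  intro hper
  obtain ⟨j, hj⟩ := hf a
  have hle : j ≤ m * (j + 1) := le_trans (Nat.le_succ j) (Nat.le_mul_of_pos_left _ hm)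
  refine ha ((Function.IsPeriodicPt.mul_const hper (j + 1)).eq.symm.trans ?_)
  rw [← Nat.sub_add_cancel hle, Function.iterate_add_apply, hj]
  exact Function.iterate_fixed (parent_zero f) _

theorem ReachesRoot.apply_ne_succ (hf : ReachesRoot f) (k : Fin n) : f k ≠ k.succ := by
  simpa using hf.iterate_ne_self (Fin.succ_ne_zero k) one_pos

noncomputable def ReachesRoot.depth (hf : ReachesRoot f) (a : Fin (n + 1)) : ℕ := Nat.find (hf a)

theorem ReachesRoot.depth_parent_lt (hf : ReachesRoot f) {a : Fin (n + 1)} (ha : a ≠ 0) :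
    hf.depth (parent f a) < hf.depth a := by
  obtain ⟨d, hd⟩ : ∃ d, hf.depth a = d + 1 :=
    Nat.exists_eq_succ_of_ne_zero fun h => ha ((Nat.find_eq_zero (hf a)).mp h)
  have hspec : (parent f)^[d] (parent f a) = 0 := by
    rw [← Function.iterate_succ_apply, Nat.succ_eq_add_one, ← hd]
    exact Nat.find_spec (hf a)
  rw [hd, Nat.lt_succ_iff]
  exact Nat.find_le hspec

theorem exists_iterate_parent_eq_zero_iff (f : Fin n → Fin (n + 1)) (a : Fin (n + 1)) :
    (∃ m, (parent f)^[m] (parent f a) = 0) ↔ ∃ m, (parent f)^[m] a = 0 := by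
  refine ⟨fun ⟨m, hm⟩ => ⟨m + 1, hm⟩, fun ⟨m, hm⟩ => ⟨m, ?_⟩⟩
  rw [← Function.iterate_succ_apply, Function.iterate_succ_apply', hm, parent_zero]

def parentMatrix (R : Type*) [CommRing R] (f : Fin n → Fin (n + 1)) : Matrix (Fin n) (Fin n) R :=
  Matrix.of fun k c => (if f k = c.succ then 1 else 0) - if k = c then 1 else 0

theorem det_submatrix_succ_succ (L : Matrix (Fin (n + 1)) (Fin (n + 1)) R)
    (hrow : ∀ i, ∑ j, L i j = 0) :
    (L.submatrix Fin.succ Fin.succ).det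
      = ∑ f : Fin n → Fin (n + 1), (∏ k, L k.succ (f k)) * (parentMatrix R f).det := by
  have hrows : L.submatrix Fin.succ Fin.succ = Matrix.of fun k => ∑ b, L k.succ b •
      fun c : Fin n => (if b = c.succ then (1 : R) else 0) - if k = c then 1 else 0 := by
    ext k c
    simp [Finset.sum_apply, mul_sub, Finset.sum_sub_distrib, hrow]
  rw [hrows, Matrix.det_of_sum_smul]
  rfl

theorem parentMatrix_mulVec_tail (f : Fin n → Fin (n + 1)) {x : Fin (n + 1) → R}
    (hx : x 0 = 0) :
    parentMatrix R f *ᵥ Fin.tail x = fun k => x (f k) - x k.succ := by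
  ext k
  have hsum : ∑ c : Fin n, (if f k = c.succ then x c.succ else 0) = x (f k) := by
    have := Finset.sum_ite_eq univ (f k) x
    rw [Fin.sum_univ_succ, hx, ite_self, zero_add] at this
    simpa using this
  simp [parentMatrix, mulVec, dotProduct, sub_mul, Fin.tail, hsum]

theorem det_parentMatrix_of_not_reachesRoot (hf : ¬ReachesRoot f) :
    (parentMatrix R f).det = 0 := by
  obtain ⟨a, ha⟩ := not_forall.mp hf
  let x : Fin (n + 1) → R := fun a => if ∃ m, (parent f)^[m] a = 0 then 0 else 1
  have hx0 : x 0 = 0 := if_pos ⟨0, rfl⟩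
  have hker : parentMatrix R f *ᵥ Fin.tail x = 0 := by
    rw [parentMatrix_mulVec_tail f hx0]
    ext k
    simp only [x, ← parent_succ f k, exists_iterate_parent_eq_zero_iff, sub_self, Pi.zero_apply]
  obtain ⟨k, rfl⟩ := Fin.exists_succ_eq.mpr fun h : a = 0 => ha ⟨0, h⟩
  refine Matrix.det_eq_zero_of_mulVec_eq_zero_of_mem_nonZeroDivisors hker (i := k) ?_
  simp only [Fin.tail, x, if_neg ha]
  exact one_mem _

theorem det_parentMatrix_of_reachesRoot (hf : ReachesRoot f) :
    (parentMatrix R f).det = (-1) ^ n := by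
  -- `ᵒᵈ` because `BlockTriangular` means upper triangular, while parents have smaller depth.
  let b : Fin n → ℕᵒᵈ := fun k => OrderDual.toDual (hf.depth k.succ)
  have hlt : ∀ k c : Fin n, f k = c.succ → hf.depth c.succ < hf.depth k.succ := fun k c h => by
    simpa [h] using hf.depth_parent_lt (Fin.succ_ne_zero k)
  have htri : (parentMatrix R f).BlockTriangular b := fun k c hck => by
    have hck : hf.depth k.succ < hf.depth c.succ := hck
    have hne : k ≠ c := by rintro rfl; exact lt_irrefl _ hck
    have hfk : f k ≠ c.succ := fun h => lt_asymm (hlt k c h) hck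
    simp [parentMatrix, hne, hfk]
  have hdiag : ∀ k c : Fin n, b k = b c →
      parentMatrix R f k c = (-1 : Matrix (Fin n) (Fin n) R) k c :=
    fun k c hkc => by
      have : f k ≠ c.succ := fun h => (hlt k c h).ne (congrArg OrderDual.ofDual hkc).symm
      simp [parentMatrix, this, Matrix.one_apply]
  rw [htri.det_eq_det Matrix.blockTriangular_one.neg hdiag, Matrix.det_neg, Matrix.det_one,
    mul_one, Fintype.card_fin]

theorem det_parentMatrix (f : Fin n → Fin (n + 1)) :
    (parentMatrix R f).det = if ReachesRoot f then (-1) ^ n else 0 := by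
  split_ifs with hf
  · exact det_parentMatrix_of_reachesRoot hf
  · exact det_parentMatrix_of_not_reachesRoot hf

open SimpleGraph

def parentGraph (f : Fin n → Fin (n + 1)) : SimpleGraph (Fin (n + 1)) :=
  fromEdgeSet (Set.range fun k => s(k.succ, f k))

theorem ReachesRoot.parentGraph_adj (hf : ReachesRoot f) (k : Fin n) :
    (parentGraph f).Adj k.succ (f k) :=
  (fromEdgeSet_adj _).mpr ⟨⟨k, rfl⟩, (hf.apply_ne_succ k).symm⟩

theorem ReachesRoot.injective_edge (hf : ReachesRoot f) :
    Function.Injective fun k => s(k.succ, f k) := fun k k' h => by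
  rcases Sym2.eq_iff.mp h with ⟨hk, -⟩ | ⟨hk, hk'⟩
  · exact Fin.succ_injective _ hk
  · refine absurd ?_ (hf.iterate_ne_self (Fin.succ_ne_zero k) two_pos)
    change parent f (parent f k.succ) = k.succ
    rw [parent_succ, hk', parent_succ, hk]

theorem ReachesRoot.edgeSet_parentGraph (hf : ReachesRoot f) :
    (parentGraph f).edgeSet = Set.range fun k => s(k.succ, f k) := by
  rw [parentGraph, edgeSet_fromEdgeSet, sdiff_eq_left, Set.disjoint_left]
  rintro _ ⟨k, rfl⟩
  simpa [eq_comm] using hf.apply_ne_succ k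

theorem ReachesRoot.connected_parentGraph (hf : ReachesRoot f) : (parentGraph f).Connected := by
  have hstep : ∀ a, (parentGraph f).Reachable a (parent f a) := Fin.cases (by simp)
    fun k => (hf.parentGraph_adj k).reachable
  have hroot : ∀ m a, (parentGraph f).Reachable a ((parent f)^[m] a) := fun m => by
    induction m with
    | zero => exact fun a => Reachable.refl a
    | succ m ih => exact fun a => (hstep a).trans (ih (parent f a))
  refine (connected_iff_exists_forall_reachable _).mpr ⟨0, fun a => ?_⟩
  obtain ⟨m, hm⟩ := hf a
  exact (hm ▸ hroot m a).symm

theorem ReachesRoot.isTree_parentGraph (hf : ReachesRoot f) : (parentGraph f).IsTree := by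
  refine isTree_iff_connected_and_card.mpr ⟨hf.connected_parentGraph, ?_⟩
  rw [hf.edgeSet_parentGraph, Nat.card_range_of_injective hf.injective_edge]
  simp

theorem ReachesRoot.eq_of_parentGraph_le (hf : ReachesRoot f) {g : Fin n → Fin (n + 1)}
    (hle : parentGraph f ≤ parentGraph g) : f = g := by
  funext k
  induction hd : hf.depth k.succ using Nat.strong_induction_on generalizing k with
  | _ d ih =>
  by_contra hne
  obtain ⟨⟨i, hi⟩, -⟩ := (fromEdgeSet_adj _).mp (hle (hf.parentGraph_adj k))
  rcases Sym2.eq_iff.mp hi with ⟨hik, hgi⟩ | ⟨hif, hgi⟩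
  · rw [Fin.succ_injective _ hik] at hgi
    exact hne hgi.symm
  · -- `f k = i.succ` is a child of `k.succ` for `g`; by induction also for `f`: a 2-cycle.
    have hdi : hf.depth i.succ < d := by
      rw [← hd, hif]
      simpa using hf.depth_parent_lt (Fin.succ_ne_zero k)
    have hfi : f i = g i := ih _ hdi i rfl
    refine hf.iterate_ne_self (Fin.succ_ne_zero k) two_pos ?_
    change parent f (parent f k.succ) = k.succ
    rw [parent_succ, ← hif, parent_succ, hfi, hgi]

theorem exists_parentGraph_eq {τ : SimpleGraph (Fin (n + 1))} (hτ : τ.IsTree) :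
    ∃ f, ReachesRoot f ∧ parentGraph f = τ := by
  have hcloser : ∀ k : Fin n, ∃ b, τ.Adj k.succ b ∧ τ.dist b 0 < τ.dist k.succ 0 := by
    intro k
    obtain ⟨p, hp⟩ := hτ.connected.exists_walk_length_eq_dist k.succ 0
    cases p with
    | cons h q =>
      rw [Walk.length_cons] at hp
      exact ⟨_, h, by have := dist_le q; omega⟩
  choose f hadj hdist using hcloser
  have hf : ReachesRoot f := fun a => by
    induction hd : τ.dist a 0 using Nat.strong_induction_on generalizing a with
    | _ d ih =>
    cases a using Fin.cases with
    | zero => exact ⟨0, rfl⟩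
    | succ k =>
      obtain ⟨m, hm⟩ := ih _ (hd ▸ hdist k) (f k) rfl
      exact ⟨m + 1, hm⟩
  have hle : parentGraph f ≤ τ := fun a b ⟨⟨k, hk⟩, _⟩ => by
    rw [← mem_edgeSet, ← hk]
    exact hadj k
  exact ⟨f, hf, le_antisymm hle
    ((isTree_iff_minimal_connected.mp hτ).le_of_le hf.connected_parentGraph hle)⟩

theorem amplitude_eq_prod_edgeFinset (τ : SimpleGraph (Fin n))
    {L : Matrix (Fin n) (Fin n) ℝ} (hL : L.IsSymm) :
    amplitude τ L =
      ∏ e ∈ τ.edgeFinset, Sym2.lift ⟨fun a b => L a b, fun a b => hL.apply b a⟩ e := by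
  refine Finset.prod_nbij' (fun p => s(p.1, p.2)) (fun e => (e.inf, e.sup)) ?_ ?_ ?_ ?_ ?_
  · intro p hp
    simpa using (mem_filter.mp hp).2.2
  · intro e he
    induction e using Sym2.ind with | _ a b
    simp only [mem_edgeFinset, mem_edgeSet, Sym2.inf_mk, Sym2.sup_mk, mem_filter, mem_univ,
      lt_sup_iff, inf_lt_left, not_le, inf_lt_right, lt_or_lt_iff_ne, ne_eq, true_and] at he ⊢
    refine ⟨he.ne.symm, ?_⟩
    rcases le_total a b with h | h
    · simpa [h] using he
    · simpa [h] using he.symm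
  · intro p hp
    simp only [mem_filter] at hp
    exact Prod.ext (min_eq_left hp.2.1.le) (max_eq_right hp.2.1.le)
  · intro e _
    exact Sym2.sortEquiv.symm_apply_apply e
  · intro p _
    rfl

theorem amplitude_parentGraph {L : Matrix (Fin (n + 1)) (Fin (n + 1)) ℝ} (hL : L.IsSymm)
    (hf : ReachesRoot f) : amplitude (parentGraph f) L = ∏ k, L k.succ (f k) := by
  rw [amplitude_eq_prod_edgeFinset _ hL]
  symm
  refine Finset.prod_nbij (fun k => s(k.succ, f k)) (fun k _ => ?_) hf.injective_edge.injOn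
    (fun e he => ?_) (fun k _ => rfl)
  · rw [mem_edgeFinset, hf.edgeSet_parentGraph]
    exact ⟨k, rfl⟩
  · rw [mem_coe, mem_edgeFinset, hf.edgeSet_parentGraph] at he
    obtain ⟨k, rfl⟩ := he
    exact ⟨k, mem_coe.mpr (mem_univ _), rfl⟩

theorem treeSum_eq_sum_prod {L : Matrix (Fin (n + 1)) (Fin (n + 1)) ℝ} (hL : L.IsSymm) :
    treeSum L = ∑ f : Fin n → Fin (n + 1) with ReachesRoot f, ∏ k, L k.succ (f k) := by
  symm
  refine Finset.sum_bij (fun f _ => parentGraph f) (fun f hf => ?_) (fun f hf g _ h => ?_)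
    (fun τ hτ => ?_) (fun f hf => ?_)
  · exact mem_filter.mpr ⟨mem_univ _, (mem_filter.mp hf).2.isTree_parentGraph⟩
  · exact (mem_filter.mp hf).2.eq_of_parentGraph_le h.le
  · obtain ⟨f, hf, rfl⟩ := exists_parentGraph_eq (mem_filter.mp hτ).2
    exact ⟨f, mem_filter.mpr ⟨mem_univ _, hf⟩, rfl⟩
  · exact (amplitude_parentGraph hL (mem_filter.mp hf).2).symm

end MatrixTree

/-- weighted Matrix-Tree theorem: for an `(n+1) × (n+1)` symmetric real
matrix with zero row sums, every cofactor equals `(-1)^{(n+1)+1} Σ_τ A_τ(L)`. -/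
theorem matrix_tree_theorem {n : ℕ} (L : Matrix (Fin (n + 1)) (Fin (n + 1)) ℝ)
    (hsymm : L.IsSymm) (hrow : ∀ i, ∑ j, L i j = 0) :
    ∀ i j, cofactor L i j = (-1 : ℝ) ^ ((n + 1) + 1) * treeSum L := by
  intro i j
  rw [cofactor_eq_adjugate, Matrix.adjugate_apply_eq_of_isSymm L hsymm hrow j i 0 0,
    ← cofactor_eq_adjugate, cofactor_zero_zero, MatrixTree.det_submatrix_succ_succ L hrow,
    MatrixTree.treeSum_eq_sum_prod hsymm, Finset.mul_sum, Finset.sum_filter]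
  refine Finset.sum_congr rfl fun f _ => ?_
  rw [MatrixTree.det_parentMatrix]
  split_ifs <;> ring
end

section
/- For an n×n Laplace-like matrix L and indices i < j, the directional derivative v_{ij}(C(L)) of the common cofactor C(L) along the tangent vector v_{ij} = ∂/∂L_{ij} + ∂/∂L_{ji} − ∂/∂L_{ii} − ∂/∂L_{jj} equals −C(L'), where L' = M_{jj}(L_+) and L_+ is obtained from L by adding row j to row i and column j to column i. -/
/-- The tangent vector `E_{ij}`: `+1` at entries `(i,j)` and `(j,i)`, `-1` at
entries `(i,i)` and `(j,j)`, `0` elsewhere. -/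
def tangentE {n : ℕ} (i j : Fin n) : Matrix (Fin n) (Fin n) ℝ :=
  Matrix.of fun a b =>
    (if a = i ∧ b = j then (1 : ℝ) else 0) + (if a = j ∧ b = i then 1 else 0) -
      (if a = i ∧ b = i then 1 else 0) - (if a = j ∧ b = j then 1 else 0)

/-- `L₊`: the matrix obtained from `L` by adding row `j` to row `i` and then
column `j` to column `i`. -/
def addRowCol {n : ℕ} (L : Matrix (Fin n) (Fin n) ℝ) (i j : Fin n) :
    Matrix (Fin n) (Fin n) ℝ :=
  Matrix.of fun a b =>
    L a b + (if a = i then L j b else 0) +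
      (if b = i then L a j + (if a = i then L j j else 0) else 0)

open Finset

namespace Matrix

variable {ι R : Type*} [Fintype ι]

structure IsLaplaceLike [AddCommMonoid R] (M : Matrix ι ι R) : Prop where
  isSymm : M.IsSymm
  sum_row : ∀ a, ∑ b, M a b = 0

theorem IsLaplaceLike.add [AddCommMonoid R] {M N : Matrix ι ι R} (hM : M.IsLaplaceLike)
    (hN : N.IsLaplaceLike) : (M + N).IsLaplaceLike where
  isSymm := hM.isSymm.add hN.isSymm
  sum_row a := by simp only [add_apply, sum_add_distrib, hM.sum_row, hN.sum_row, add_zero]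

theorem IsLaplaceLike.smul [CommSemiring R] {M : Matrix ι ι R} (hM : M.IsLaplaceLike) (c : R) :
    (c • M).IsLaplaceLike where
  isSymm := hM.isSymm.smul c
  sum_row a := by simp only [smul_apply, smul_eq_mul, ← mul_sum, hM.sum_row, mul_zero]

section CommRing

variable [DecidableEq ι] [CommRing R]

theorem det_eq_zero_of_sum_row_eq_zero [Nonempty ι] {M : Matrix ι ι R}
    (h : ∀ a, ∑ b, M a b = 0) : M.det = 0 :=
  det_eq_zero_of_mulVec_eq_zero_of_mem_nonZeroDivisors (v := fun _ => 1)
    (funext fun a => by simpa [mulVec, dotProduct] using h a) (i := Classical.arbitrary ι)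
    (one_mem _)

/-- Replacing row `a` by `e_b - e_{b'}` keeps all row sums zero, so the determinant vanishes, and
by linearity in row `a` it equals `adj(M)_{ba} - adj(M)_{b'a}`. -/
theorem adjugate_apply_eq_of_sum_row_eq_zero {M : Matrix ι ι R} (h : ∀ a, ∑ b, M a b = 0)
    (b b' a : ι) : M.adjugate b a = M.adjugate b' a := by
  have hzero : (M.updateRow a (Pi.single b 1 + (-1 : R) • Pi.single b' 1)).det = 0 := by
    have : Nonempty ι := ⟨a⟩
    refine det_eq_zero_of_sum_row_eq_zero fun r => ?_
    rcases eq_or_ne r a with rfl | hr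
    · simp [Pi.single_apply, sum_add_distrib]
    · simpa [updateRow_ne hr] using h r
  rw [det_updateRow_add, det_updateRow_smul, ← adjugate_apply, ← adjugate_apply] at hzero
  linear_combination hzero

theorem IsLaplaceLike.adjugate_apply_eq {M : Matrix ι ι R} (hM : M.IsLaplaceLike)
    (a b a' b' : ι) : M.adjugate a b = M.adjugate a' b' := by
  have hsymm x y : M.adjugate x y = M.adjugate y x := by
    rw [← transpose_apply M.adjugate, adjugate_transpose, hM.isSymm.eq]
  calc M.adjugate a b = M.adjugate a' b := adjugate_apply_eq_of_sum_row_eq_zero hM.sum_row a a' b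
    _ = M.adjugate b a' := hsymm a' b
    _ = M.adjugate b' a' := adjugate_apply_eq_of_sum_row_eq_zero hM.sum_row b b' a'
    _ = M.adjugate a' b' := hsymm b' a'

theorem det_add_smul_single (A : Matrix ι ι R) (k : ι) (c : R) :
    (A + c • single k k 1).det = A.det + c * A.adjugate k k := by
  have hrow : A + c • single k k 1 = A.updateRow k (A k + c • Pi.single k 1) := by
    ext x y
    rcases eq_or_ne x k with rfl | hx
    · simp [single_apply, Pi.single_apply, eq_comm]
    · simp [updateRow_ne hx, hx.symm]
  rw [hrow, det_updateRow_add, det_updateRow_smul, updateRow_eq_self, adjugate_apply]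

end CommRing

end Matrix

open Matrix

theorem cofactor_eq_adjugate_s7 {m : ℕ} (M : Matrix (Fin (m + 1)) (Fin (m + 1)) ℝ)
    (a b : Fin (m + 1)) : cofactor M a b = M.adjugate b a := by
  rw [cofactor, adjugate_fin_succ_eq_det_submatrix]

theorem cofactor_self {m : ℕ} (M : Matrix (Fin (m + 1)) (Fin (m + 1)) ℝ) (k : Fin (m + 1)) :
    cofactor M k k = (M.submatrix k.succAbove k.succAbove).det := by
  rw [cofactor, Even.neg_one_pow ⟨k, rfl⟩, one_mul]

theorem Matrix.IsLaplaceLike.cofactor_eq {m : ℕ} {M : Matrix (Fin (m + 1)) (Fin (m + 1)) ℝ}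
    (hM : M.IsLaplaceLike) (a b a' b' : Fin (m + 1)) : cofactor M a b = cofactor M a' b' := by
  rw [cofactor_eq_adjugate_s7, cofactor_eq_adjugate_s7, hM.adjugate_apply_eq]

theorem Matrix.IsLaplaceLike.submatrix_succAbove {m : ℕ} {R : Type*} [AddCommGroup R]
    {M : Matrix (Fin (m + 1)) (Fin (m + 1)) R} (hs : M.IsSymm) {j : Fin (m + 1)}
    (h : ∀ a, ∑ b, M a b = M a j) : (M.submatrix j.succAbove j.succAbove).IsLaplaceLike where
  isSymm := hs.submatrix _
  sum_row a := by
    have := h (j.succAbove a)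
    rw [Fin.sum_univ_succAbove _ j] at this
    simpa using this

theorem isLaplaceLike_tangentE {m : ℕ} (i j : Fin m) : (tangentE i j).IsLaplaceLike where
  isSymm := by
    ext a b
    simp only [transpose_apply, tangentE, of_apply]
    grind
  sum_row a := by
    simp only [tangentE, of_apply, sum_sub_distrib, sum_add_distrib, ite_and]
    split_ifs <;> simp_all

theorem tangentE_submatrix_succAbove {m : ℕ} (j : Fin (m + 1)) (k : Fin m) :
    (tangentE (j.succAbove k) j).submatrix j.succAbove j.succAbove = -single k k 1 := by
  ext x y
  simp [tangentE, single_apply, Fin.succAbove_ne, eq_comm (a := k)]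

section addRowCol

variable {m : ℕ} (L : Matrix (Fin m) (Fin m) ℝ) {i j : Fin m}

theorem addRowCol_apply_of_ne {a b : Fin m} (ha : a ≠ i) (hb : b ≠ i) :
    addRowCol L i j a b = L a b := by
  simp [addRowCol, ha, hb]

theorem isSymm_addRowCol (hL : L.IsSymm) : (addRowCol L i j).IsSymm := by
  ext a b
  simp only [transpose_apply, addRowCol, of_apply, hL.apply]
  grind

theorem sum_addRowCol_row (hL : ∀ a, ∑ b, L a b = 0) (hij : i ≠ j) (a : Fin m) :
    ∑ b, addRowCol L i j a b = addRowCol L i j a j := by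
  simp only [addRowCol, of_apply, sum_add_distrib, hL, sum_ite_eq', mem_univ, if_true,
    if_neg hij.symm]
  split_ifs <;> simp [hL]

end addRowCol

theorem addRowCol_submatrix_succAbove_submatrix_succAbove {m : ℕ}
    (L : Matrix (Fin (m + 2)) (Fin (m + 2)) ℝ) (j : Fin (m + 2)) (k : Fin (m + 1)) :
    ((addRowCol L (j.succAbove k) j).submatrix j.succAbove j.succAbove).submatrix
      k.succAbove k.succAbove =
    (L.submatrix j.succAbove j.succAbove).submatrix k.succAbove k.succAbove := by
  ext x y
  exact addRowCol_apply_of_ne L (Fin.succAbove_right_injective.ne (Fin.succAbove_ne k x))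
    (Fin.succAbove_right_injective.ne (Fin.succAbove_ne k y))

/-- for a Laplace-like `L` and `i < j`, the directional derivative of the
common cofactor `C(L)` along `v_{ij}` (i.e. `d/dt C(L + t E_{ij})` at `t = 0`) equals
`-C(L')` where `L' = M_{jj}(L₊)`.  (All cofactors of a Laplace-like matrix agree, so
the statement is made for every representative of `C`.) -/
theorem cofactor_directional_derivative {n : ℕ}
    (L : Matrix (Fin (n + 2)) (Fin (n + 2)) ℝ)
    (hsymm : L.IsSymm) (hrow : ∀ i, ∑ j, L i j = 0)
    (i j : Fin (n + 2)) (hij : i < j) :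
    ∀ (a b : Fin (n + 2)) (a' b' : Fin (n + 1)),
      deriv (fun t : ℝ => cofactor (L + t • tangentE i j) a b) 0 =
        -cofactor ((addRowCol L i j).submatrix j.succAbove j.succAbove) a' b' := by
  intro a b a' b'
  obtain ⟨k, rfl⟩ := Fin.exists_succAbove_eq hij.ne
  have hL : L.IsLaplaceLike := ⟨hsymm, hrow⟩
  set A := L.submatrix j.succAbove j.succAbove
  have hC (t : ℝ) : cofactor (L + t • tangentE (j.succAbove k) j) a b =
      A.det + (-t) * A.adjugate k k := by
    have hminor : (L + t • tangentE (j.succAbove k) j).submatrix j.succAbove j.succAbove =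
        A + (-t) • single k k 1 := by
      rw [neg_smul, ← smul_neg, ← tangentE_submatrix_succAbove]
      rfl
    rw [(hL.add ((isLaplaceLike_tangentE _ j).smul t)).cofactor_eq a b j j, cofactor_self,
      hminor, det_add_smul_single]
  have hL' : ((addRowCol L (j.succAbove k) j).submatrix j.succAbove j.succAbove).IsLaplaceLike :=
    .submatrix_succAbove (isSymm_addRowCol L hsymm)
      (sum_addRowCol_row L hrow (Fin.succAbove_ne j k))
  have hderiv : HasDerivAt (fun t : ℝ => A.det + (-t) * A.adjugate k k) (-A.adjugate k k) 0 := by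
    simpa using ((hasDerivAt_neg (0 : ℝ)).mul_const (A.adjugate k k)).const_add A.det
  rw [funext hC, hderiv.deriv, hL'.cofactor_eq a' b' k k, cofactor_self,
    addRowCol_submatrix_succAbove_submatrix_succAbove, ← cofactor_self,
    cofactor_eq_adjugate_s7]
end
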